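/- For all t₁, u₁, t₂, u₂ ∈ F and every ε ∈ F with ε ≠ 0, the element x₊(t₁,u₁) · h(ε) · w · x₊(t₂,u₂) lies in the product set U · U⁻ · U · U⁻ (this is the big Bruhat cell case of the factorization Sz(q) = U·U⁻·U·U⁻). -/

import Mathlib

open Matrix Pointwise

/-- The Suzuki unipotent `x₊(t,u)` as a 4×4 matrix. -/
def suzXp {F : Type*} [Field F] (θ : ℕ) (t u : F) : Matrix (Fin 4) (Fin 4) F :=
  !![1, t ^ θ, u, t ^ (2 * θ + 1) + t ^ θ * u + u ^ (2 * θ);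
     0, 1, t, t ^ (θ + 1) + u;
     0, 0, 1, t ^ θ;
     0, 0, 0, 1]

/-- The antidiagonal permutation matrix `w` (1-indexed: entry 1 iff i+j = 5). -/
def suzW {F : Type*} [Field F] : Matrix (Fin 4) (Fin 4) F :=
  Matrix.of fun i j => if (i : ℕ) + (j : ℕ) = 3 then 1 else 0

/-- The torus element `h(ε) = diag(ε, ε^{2θ-1}, ε^{1-2θ}, ε⁻¹)`. -/
def suzH {F : Type*} [Field F] (θ : ℕ) (ε : F) : Matrix (Fin 4) (Fin 4) F :=
  Matrix.diagonal ![ε, ε ^ (2 * (θ : ℤ) - 1), ε ^ (1 - 2 * (θ : ℤ)), ε⁻¹]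

/-- The opposite unipotent `x₋(t,u) = w·x₊(t,u)·w`. -/
def suzXm {F : Type*} [Field F] (θ : ℕ) (t u : F) : Matrix (Fin 4) (Fin 4) F :=
  suzW * suzXp θ t u * suzW

/-- `U = {x₊(t,u)}` viewed as a subset of `GL(4,F)`. -/
def suzU (F : Type*) [Field F] (θ : ℕ) : Set (GL (Fin 4) F) :=
  {g | ∃ t u : F, (↑g : Matrix (Fin 4) (Fin 4) F) = suzXp θ t u}

/-- `U⁻ = {x₋(t,u)}` viewed as a subset of `GL(4,F)`. -/
def suzUm (F : Type*) [Field F] (θ : ℕ) : Set (GL (Fin 4) F) :=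
  {g | ∃ t u : F, (↑g : Matrix (Fin 4) (Fin 4) F) = suzXm θ t u}

/-! The big cell is `U h w U`. Since `w x₊(t,u) = x₋(t,u) w` and the torus normalises `U⁻`,
`h w x₊(t₂,u₂) = x₋(t',u') h w`. As in `SL₂`, the Weyl element times a torus element factors as
`h w = x₋(a,0) x₊(0,ε^θ) x₋(a,ε^{-θ})` with `a = ε^{1-2θ}`; merging the two adjacent `U⁻`
factors puts the element in `U U⁻ U U⁻`. -/

section SuzukiMatrices

variable {F : Type*} [Field F] {θ : ℕ}

theorem suzW_eq :
    (suzW : Matrix (Fin 4) (Fin 4) F) = !![0, 0, 0, 1; 0, 0, 1, 0; 0, 1, 0, 0; 1, 0, 0, 0] := by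
  ext i j
  fin_cases i <;> fin_cases j <;> rfl

theorem suzW_mul_suzW : (suzW : Matrix (Fin 4) (Fin 4) F) * suzW = 1 := by
  rw [suzW_eq]
  ext i j
  fin_cases i <;> fin_cases j <;> simp [Matrix.mul_apply, Fin.sum_univ_four]

theorem suzW_mul_suzXp (t u : F) : suzW * suzXp θ t u = suzXm θ t u * suzW := by
  rw [suzXm, mul_assoc, suzW_mul_suzW, mul_one]

theorem suzXp_eq (t u : F) : suzXp θ t u =
    !![1, t ^ θ, u, (t ^ θ) ^ 2 * t + t ^ θ * u + (u ^ θ) ^ 2;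
       0, 1, t, t ^ θ * t + u;
       0, 0, 1, t ^ θ;
       0, 0, 0, 1] := by
  rw [suzXp, pow_succ, pow_succ, pow_mul', pow_mul']

theorem suzXm_eq (t u : F) : suzXm θ t u =
    !![1, 0, 0, 0;
       t ^ θ, 1, 0, 0;
       t ^ θ * t + u, t, 1, 0;
       (t ^ θ) ^ 2 * t + t ^ θ * u + (u ^ θ) ^ 2, u, t ^ θ, 1] := by
  rw [suzXm, suzXp_eq]
  ext i j
  fin_cases i <;> fin_cases j <;> simp [suzW_eq, Matrix.mul_apply, Fin.sum_univ_four]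

theorem suzH_eq_diagonal {ε : F} (hε : ε ≠ 0) :
    suzH θ ε = Matrix.diagonal ![ε, (ε ^ θ) ^ 2 / ε, ε / (ε ^ θ) ^ 2, ε⁻¹] := by
  rw [suzH, zpow_sub₀ hε, zpow_sub₀ hε, _root_.zpow_mul, zpow_one]
  norm_cast
  rw [pow_right_comm ε 2 θ]

theorem det_suzXp (t u : F) : (suzXp θ t u).det = 1 := by
  rw [Matrix.det_of_isUpperTriangular]
  · simp [suzXp, Fin.prod_univ_four]
  · intro i j hji
    fin_cases i <;> fin_cases j <;> first | exact absurd hji (by decide) | rfl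

theorem isUnit_suzXp (t u : F) : IsUnit (suzXp θ t u) := by
  simp [Matrix.isUnit_iff_isUnit_det, det_suzXp]

theorem isUnit_suzW : IsUnit (suzW : Matrix (Fin 4) (Fin 4) F) :=
  ⟨⟨suzW, suzW, suzW_mul_suzW, suzW_mul_suzW⟩, rfl⟩

theorem isUnit_suzXm (t u : F) : IsUnit (suzXm θ t u) :=
  (isUnit_suzW.mul (isUnit_suzXp t u)).mul isUnit_suzW

theorem mem_suzU_mul_suzUm_mul_suzU_mul_suzUm {g : GL (Fin 4) F} {a b c d e f k l : F}
    (hg : (g : Matrix (Fin 4) (Fin 4) F) =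
      suzXp θ a b * suzXm θ c d * suzXp θ e f * suzXm θ k l) :
    g ∈ suzU F θ * suzUm F θ * suzU F θ * suzUm F θ := by
  have hg' : g = (isUnit_suzXp a b).unit * (isUnit_suzXm c d).unit *
      (isUnit_suzXp e f).unit * (isUnit_suzXm k l).unit := Units.ext hg
  rw [hg']
  exact Set.mul_mem_mul
    (Set.mul_mem_mul (Set.mul_mem_mul ⟨a, b, rfl⟩ ⟨c, d, rfl⟩) ⟨e, f, rfl⟩) ⟨k, l, rfl⟩

theorem suzXp_mul_suzXp [CharP F 2] (hadd : ∀ x y : F, (x + y) ^ θ = x ^ θ + y ^ θ)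
    (hinv : ∀ x : F, (x ^ θ) ^ (2 * θ) = x) (a b c d : F) :
    suzXp θ a b * suzXp θ c d = suzXp θ (a + c) (b + d + a ^ θ * c) := by
  have ha : ((a ^ θ) ^ θ) ^ 2 = a := by rw [← pow_mul, mul_comm, hinv]
  rw [suzXp_eq, suzXp_eq, suzXp_eq, hadd, hadd, hadd, mul_pow]
  ext i j
  fin_cases i <;> fin_cases j <;> simp [Matrix.mul_apply, Fin.sum_univ_four] <;> grind

theorem suzXm_mul_suzXm [CharP F 2] (hadd : ∀ x y : F, (x + y) ^ θ = x ^ θ + y ^ θ)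
    (hinv : ∀ x : F, (x ^ θ) ^ (2 * θ) = x) (a b c d : F) :
    suzXm θ a b * suzXm θ c d = suzXm θ (a + c) (b + d + a ^ θ * c) := by
  simp only [suzXm, ← suzXp_mul_suzXp hadd hinv, mul_assoc, ← mul_assoc suzW suzW,
    suzW_mul_suzW, one_mul]

theorem suzH_mul_suzXm {ε : F} (hε : ε ≠ 0) (hεθ : (ε ^ θ) ^ (2 * θ) = ε) (t u : F) :
    suzH θ ε * suzXm θ t u =
      suzXm θ (t * ε ^ 2 / (ε ^ θ) ^ 4) (u / (ε ^ θ) ^ 2) * suzH θ ε := by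
  have hμ : ((ε ^ θ) ^ θ) ^ 2 = ε := by rw [← pow_mul, mul_comm, hεθ]
  have ht : (t * ε ^ 2 / (ε ^ θ) ^ 4) ^ θ = t ^ θ * (ε ^ θ) ^ 2 / ε ^ 2 := by
    rw [div_pow, mul_pow, pow_right_comm ε 2, pow_right_comm _ 4, show 4 = 2 * 2 from rfl,
      pow_mul, hμ]
  have hu : (u / (ε ^ θ) ^ 2) ^ θ = u ^ θ / ε := by
    rw [div_pow, pow_right_comm _ 2, hμ]
  rw [suzH_eq_diagonal hε, suzXm_eq, suzXm_eq, ht, hu]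
  ext i j
  fin_cases i <;> fin_cases j <;>
    simp [Matrix.diagonal_mul, Matrix.mul_diagonal] <;> field_simp

theorem suzH_mul_suzW [CharP F 2] (hθ : θ ≠ 0) {ε : F} (hε : ε ≠ 0)
    (hεθ : (ε ^ θ) ^ (2 * θ) = ε) :
    suzH θ ε * suzW =
      suzXm θ (ε / (ε ^ θ) ^ 2) 0 * suzXp θ 0 (ε ^ θ)
        * suzXm θ (ε / (ε ^ θ) ^ 2) (ε ^ θ)⁻¹ := by
  have hμ : ((ε ^ θ) ^ θ) ^ 2 = ε := by rw [← pow_mul, mul_comm, hεθ]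
  have ha : (ε / (ε ^ θ) ^ 2) ^ θ = ε ^ θ / ε := by
    rw [div_pow, pow_right_comm _ 2, hμ]
  have hc : (((ε ^ θ)⁻¹) ^ θ) ^ 2 = ε⁻¹ := by rw [inv_pow, inv_pow, hμ]
  have hεθ0 : ε ^ θ ≠ 0 := pow_ne_zero _ hε
  rw [suzH_eq_diagonal hε, suzXm_eq, suzXm_eq, suzXp_eq, ha, hc, hμ, zero_pow hθ, suzW_eq]
  ext i j
  fin_cases i <;> fin_cases j <;>
    simp [Matrix.mul_apply, Fin.sum_univ_four, Matrix.diagonal] <;> grind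

theorem suzXp_mul_suzH_mul_suzW_mul_suzXp [CharP F 2] (hθ : θ ≠ 0)
    (hadd : ∀ x y : F, (x + y) ^ θ = x ^ θ + y ^ θ) (hinv : ∀ x : F, (x ^ θ) ^ (2 * θ) = x)
    (t₁ u₁ t₂ u₂ : F) {ε : F} (hε : ε ≠ 0) :
    suzXp θ t₁ u₁ * suzH θ ε * suzW * suzXp θ t₂ u₂ =
      suzXp θ t₁ u₁
        * suzXm θ (t₂ * ε ^ 2 / (ε ^ θ) ^ 4 + ε / (ε ^ θ) ^ 2)
            (u₂ / (ε ^ θ) ^ 2 + (t₂ * ε ^ 2 / (ε ^ θ) ^ 4) ^ θ * (ε / (ε ^ θ) ^ 2))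
        * suzXp θ 0 (ε ^ θ) * suzXm θ (ε / (ε ^ θ) ^ 2) (ε ^ θ)⁻¹ := by
  calc suzXp θ t₁ u₁ * suzH θ ε * suzW * suzXp θ t₂ u₂
      = suzXp θ t₁ u₁ * (suzH θ ε * suzXm θ t₂ u₂) * suzW := by
        simp only [mul_assoc, suzW_mul_suzXp]
    _ = suzXp θ t₁ u₁ * suzXm θ (t₂ * ε ^ 2 / (ε ^ θ) ^ 4) (u₂ / (ε ^ θ) ^ 2)
          * (suzH θ ε * suzW) := by
        rw [suzH_mul_suzXm hε (hinv ε)]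
        simp only [mul_assoc]
    _ = suzXp θ t₁ u₁
          * (suzXm θ (t₂ * ε ^ 2 / (ε ^ θ) ^ 4) (u₂ / (ε ^ θ) ^ 2) * suzXm θ (ε / (ε ^ θ) ^ 2) 0)
          * suzXp θ 0 (ε ^ θ) * suzXm θ (ε / (ε ^ θ) ^ 2) (ε ^ θ)⁻¹ := by
        rw [suzH_mul_suzW hθ hε (hinv ε)]
        simp only [mul_assoc]
    _ = _ := by rw [suzXm_mul_suzXm hadd hinv, add_zero]

end SuzukiMatrices

theorem pow_pow_two_mul_eq_self_of_card_eq {F : Type*} [Field F] [Fintype F] {θ : ℕ}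
    (hF : Fintype.card F = 2 * θ ^ 2) (x : F) : (x ^ θ) ^ (2 * θ) = x := by
  rw [← pow_mul, show θ * (2 * θ) = Fintype.card F by rw [hF]; ring]
  exact FiniteField.pow_card x

theorem suzuki_bigCell_mem_UUmUUm (m θ : ℕ) (hθ : θ = 2 ^ m)
    (F : Type*) [Field F] [Fintype F] (hF : Fintype.card F = 2 ^ (2 * m + 1))
    (t₁ u₁ t₂ u₂ : F) (ε : F) (hε : ε ≠ 0) (g : GL (Fin 4) F)
    (hg : (↑g : Matrix (Fin 4) (Fin 4) F) =
      suzXp θ t₁ u₁ * suzH θ ε * suzW * suzXp θ t₂ u₂) :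
    g ∈ suzU F θ * suzUm F θ * suzU F θ * suzUm F θ := by
  have : CharP F 2 := charP_of_card_eq_prime_pow hF
  have hθ0 : θ ≠ 0 := hθ ▸ pow_ne_zero m two_ne_zero
  have hadd (x y : F) : (x + y) ^ θ = x ^ θ + y ^ θ := hθ ▸ add_pow_char_pow x y 2 m
  have hq : Fintype.card F = 2 * θ ^ 2 := by rw [hF, hθ]; ring
  have hinv := pow_pow_two_mul_eq_self_of_card_eq hq
  exact mem_suzU_mul_suzUm_mul_suzU_mul_suzUm
    (hg.trans (suzXp_mul_suzH_mul_suzW_mul_suzXp hθ0 hadd hinv t₁ u₁ t₂ u₂ hε))
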